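/- arXiv:1001.0447 — 5 statements merged into one kernel-verified Lean document; each statement's English description precedes it below -/
import Mathlib

section
/- For positive integers n and real (or formal) parameters a, Q, the coefficient of $z^n$ in the formal power series $\frac{(1+z)^{(a+1)n}}{(1-Qz)^{(a+1)n}}$ equals $n(a+1)\sum_{j=0}^{n} \frac{\prod_{k=1}^{n-1}(na+j+k)}{j!\,(n-j)!} Q^j$. -/
/-!
By the Cauchy product the coefficient is `∑ⱼ C(N, n - j) C(N + j - 1, j) Qʲ` with `N = (a + 1) n`.
Multiplying by `j! (n - j)!` turns the two binomial coefficients into the falling factorial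
`N (N - 1) ⋯ (na + j + 1)` and the rising factorial `N (N + 1) ⋯ (N + j - 1)`. These two runs of
consecutive integers meet at `N`, so their product is `N` times the single run
`na + j + 1, …, na + n + j - 1`, which is the product in the statement.
-/

open PowerSeries Finset
open scoped Nat

theorem Nat.prod_Icc_one_add_eq_ascFactorial (c r : ℕ) :
    ∏ k ∈ Icc 1 r, (c + k) = (c + 1).ascFactorial r := by
  induction r with
  | zero => simp
  | succ r ih => rw [prod_Icc_succ_top (by omega), ih, Nat.ascFactorial_succ]; ring

theorem Nat.descFactorial_mul_ascFactorial (m i j : ℕ) (h : 0 < i + j) :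
    (m + i + j).descFactorial i * (m + i + j).ascFactorial j
      = (m + i + j) * (m + j + 1).ascFactorial (i + j - 1) := by
  rw [show m + i + j = m + j + i by ring, Nat.add_descFactorial_eq_ascFactorial]
  cases i with
  | zero =>
    obtain ⟨j, rfl⟩ : ∃ j', j = j' + 1 := ⟨j - 1, by omega⟩
    rw [Nat.ascFactorial_succ, ← Nat.succ_ascFactorial]
    simp
  | succ i =>
    rw [Nat.ascFactorial_succ, mul_assoc, show m + j + (i + 1) = m + j + 1 + i by ring,
      Nat.ascFactorial_mul_ascFactorial]
    congr 2; omega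

theorem Nat.choose_add_sub_one_mul_choose_mul_factorial (m n j : ℕ) (hn : 0 < n)
    (hj : j ≤ n) :
    (m + n + j - 1).choose j * (m + n).choose (n - j) * (j ! * (n - j)!)
      = (m + n) * ∏ k ∈ Icc 1 (n - 1), (m + j + k) := by
  obtain ⟨i, rfl⟩ : ∃ i, n = i + j := ⟨n - j, by omega⟩
  have key := Nat.descFactorial_mul_ascFactorial m i j hn
  rw [Nat.descFactorial_eq_factorial_mul_choose, Nat.ascFactorial_eq_factorial_mul_choose']
    at key
  rw [Nat.prod_Icc_one_add_eq_ascFactorial, Nat.add_sub_cancel, ← add_assoc, ← key]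
  ring

theorem PowerSeries.coeff_one_add_X_pow (R : Type*) [CommSemiring R] (m i : ℕ) :
    coeff i ((1 + X : R⟦X⟧) ^ m) = m.choose i := by
  rw [← Polynomial.coeff_one_add_X_pow R m i, ← Polynomial.coeff_coe]
  simp

/-- The coefficient of `z^n` in `(1+z)^{(a+1)n} · (1-Qz)^{-(a+1)n}`, where
`(1-Qz)^{-N} = ∑_{j≥0} C(N+j-1, j) Q^j z^j`, equals
`n(a+1) ∑_{j=0}^{n} (∏_{k=1}^{n-1} (na+j+k)) / (j! (n-j)!) · Q^j`. -/
theorem coeff_binomial_quotient_eq {R : Type*} [CommRing R] [Algebra ℚ R]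
    (a : ℕ) (Q : R) (n : ℕ) (hn : 0 < n) :
    PowerSeries.coeff (R := R) n
      ((1 + PowerSeries.X) ^ ((a + 1) * n) *
        PowerSeries.mk fun j => ((((a + 1) * n + j - 1).choose j : R) * Q ^ j))
    = ∑ j ∈ Finset.range (n + 1),
        algebraMap ℚ R ((n * (a + 1) : ℚ) *
          (∏ k ∈ Finset.Icc 1 (n - 1), ((n * a + j + k : ℕ) : ℚ)) /
          (j.factorial * (n - j).factorial)) * Q ^ j := by
  rw [mul_comm, coeff_mul, Nat.sum_antidiagonal_eq_sum_range_succ_mk]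
  refine sum_congr rfl fun j hj => ?_
  have hjn : j ≤ n := Nat.lt_succ_iff.mp (mem_range.mp hj)
  have key := Nat.choose_add_sub_one_mul_choose_mul_factorial (n * a) n j hn hjn
  rw [show n * a + n = (a + 1) * n by ring] at key
  have hterm : (n * (a + 1) : ℚ) * (∏ k ∈ Icc 1 (n - 1), ((n * a + j + k : ℕ) : ℚ)) /
        (j ! * (n - j)!)
      = ((((a + 1) * n + j - 1).choose j * ((a + 1) * n).choose (n - j) : ℕ) : ℚ) := by
    rw [div_eq_iff (by positivity), ← Nat.cast_mul, ← Nat.cast_mul, key]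
    push_cast
    ring
  rw [coeff_mk, coeff_one_add_X_pow, hterm, map_natCast]
  push_cast
  ring
end

section
/- For positive integers $n$ and $N$ with $N\ge 1$, the coefficient of $z^n$ in the product $\left(\sum_{j\ge0}\begin{bmatrix}N+j-1\\j\end{bmatrix}Q^jz^j\right)\cdot\left(\sum_{j=0}^{N}\begin{bmatrix}N\\j\end{bmatrix}z^j\right)$ with $N=(a+1)n$ equals $[(a+1)n]\cdot\sum_{j=0}^{n}\frac{\prod_{k=1}^{n-1}[an+j+k]}{[j]!\,[n-j]!}Q^j$, where $[m]!=[m][m-1]\cdots[1]$. -/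
open Finset PowerSeries

/-- Coefficient field: rational functions in `Q` and `v = q^{1/2}`. -/
noncomputable abbrev KK : Type := RatFunc (RatFunc ℚ)

/-- The variable `v = q^{1/2}`. -/
noncomputable def vv : KK := RatFunc.X

/-- The variable `Q`. -/
noncomputable def QQ : KK := RatFunc.C RatFunc.X

/-- `[m] = v^m - v^{-m}`. -/
noncomputable def qBracket (m : ℤ) : KK := vv ^ m - vv ^ (-m)

/-- quantum factorial `[m]! = [m][m-1]⋯[1]`. -/
noncomputable def qFact (m : ℕ) : KK := ∏ i ∈ Finset.Icc 1 m, qBracket i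

/-!
The coefficient of `z^n` is the Cauchy product `∑_j [N+j-1; j] Q^j [N; n-j]`. Both binomial
numerators are runs of consecutive brackets, `[N] ⋯ [N+j-1]` and `[an+j+1] ⋯ [N]`; since
`N = an + n` they join into the run `[an+j+1] ⋯ [N+j-1]` of `n - 1` brackets, with `[N]` counted
twice, and pulling out one `[N]` leaves exactly the `j`-th term of the right-hand side.
-/

namespace Finset

variable {M : Type*} [CommMonoid M]

theorem prod_Icc_one_add_sub_eq_prod_Ico (f : ℕ → M) (c m : ℕ) :
    ∏ i ∈ Icc 1 m, f (c + m - i) = ∏ i ∈ Ico c (c + m), f i := by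
  rw [← Ico_add_one_right_eq_Icc, prod_Ico_reflect f 1 (by omega)]
  congr 2
  omega

theorem prod_Icc_one_pred_add_eq_prod_Ico (f : ℕ → M) (b m : ℕ) :
    ∏ k ∈ Icc 1 (m - 1), f (b + k) = ∏ i ∈ Ico (b + 1) (b + m), f i := by
  have hIcc : Icc 1 (m - 1) = Ico 1 m := by ext; simp only [mem_Icc, mem_Ico]; omega
  rw [hIcc, prod_Ico_add, add_comm 1, add_comm m]

theorem prod_Ico_succ_mul_prod_Ico {lo c hi : ℕ} (f : ℕ → M) (hlo : lo ≤ c + 1) (hhi : c ≤ hi)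
    (h : lo ≤ hi) :
    (∏ i ∈ Ico lo (c + 1), f i) * ∏ i ∈ Ico c hi, f i = f c * ∏ i ∈ Ico lo hi, f i := by
  rcases (Nat.le_succ_iff.mp hlo).symm with rfl | hlo
  · rw [Ico_self, prod_empty, one_mul, prod_eq_prod_Ico_succ_bot (by omega)]
  · rw [prod_Ico_succ_top hlo, mul_right_comm, prod_Ico_consecutive f hlo hhi, mul_comm]

theorem prod_rising_mul_prod_falling (f : ℤ → M) {b n j : ℕ} (hn : 0 < n) (hj : j ≤ n) :
    (∏ i ∈ Icc 1 j, f (((b + n : ℕ) : ℤ) + j - i)) *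
        ∏ i ∈ Icc 1 (n - j), f (((b + n : ℕ) : ℤ) - i + 1) =
      f ((b + n : ℕ) : ℤ) * ∏ k ∈ Icc 1 (n - 1), f ((b + j + k : ℕ) : ℤ) := by
  have hrise : ∏ i ∈ Icc 1 j, f (((b + n : ℕ) : ℤ) + j - i) =
      ∏ i ∈ Ico (b + n) (b + n + j), f i := by
    rw [← prod_Icc_one_add_sub_eq_prod_Ico (fun i : ℕ => f i)]
    refine prod_congr rfl fun i hi => ?_
    rw [mem_Icc] at hi
    congr 1
    omega
  have hfall : ∏ i ∈ Icc 1 (n - j), f (((b + n : ℕ) : ℤ) - i + 1) =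
      ∏ i ∈ Ico (b + j + 1) (b + n + 1), f i := by
    rw [show b + n + 1 = b + j + 1 + (n - j) by omega,
      ← prod_Icc_one_add_sub_eq_prod_Ico (fun i : ℕ => f i)]
    refine prod_congr rfl fun i hi => ?_
    rw [mem_Icc] at hi
    congr 1
    omega
  rw [hrise, hfall, mul_comm, prod_Ico_succ_mul_prod_Ico _ (by omega) (by omega) (by omega),
    prod_Icc_one_pred_add_eq_prod_Ico (fun i : ℕ => f i), add_right_comm b n j]

end Finset

theorem PowerSeries.coeff_sum_range_smul_X_pow {R : Type*} [Semiring R] (c : ℕ → R) {k m : ℕ}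
    (h : k < m) : coeff k (∑ j ∈ range m, c j • (X : R⟦X⟧) ^ j) = c k := by
  simp [map_sum, coeff_X_pow, h]

/-- The coefficient of `z^n` in
`(∑_{j≥0} [N+j-1; j] Q^j z^j) · (∑_{j=0}^{N} [N; j] z^j)` with `N = (a+1)n`
equals `[(a+1)n] · ∑_{j=0}^{n} (∏_{k=1}^{n-1} [an+j+k]) / ([j]! [n-j]!) · Q^j`. -/
theorem coeff_qproduct_eq (a n : ℕ) (hn : 0 < n) :
    PowerSeries.coeff (R := KK) n
      ((PowerSeries.mk fun j =>
          (∏ i ∈ Finset.Icc 1 j, qBracket (((a + 1) * n : ℕ) + j - i) / qBracket i) * QQ ^ j) *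
        (∑ j ∈ Finset.range ((a + 1) * n + 1),
          (∏ i ∈ Finset.Icc 1 j, qBracket ((((a + 1) * n : ℕ) : ℤ) - i + 1) / qBracket i) •
            (PowerSeries.X : PowerSeries KK) ^ j))
    = qBracket ((a + 1) * n) *
        ∑ j ∈ Finset.range (n + 1),
          (∏ k ∈ Finset.Icc 1 (n - 1), qBracket ((a * n + j + k : ℕ))) /
            (qFact j * qFact (n - j)) * QQ ^ j := by
  rw [coeff_mul, Nat.sum_antidiagonal_eq_sum_range_succ_mk, mul_sum]
  refine sum_congr rfl fun j hjmem => ?_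
  have hj : j ≤ n := Nat.lt_succ_iff.mp (mem_range.mp hjmem)
  have hN : (a + 1) * n = a * n + n := by ring
  rw [coeff_mk, coeff_sum_range_smul_X_pow _ (by omega), prod_div_distrib, prod_div_distrib, hN]
  have key := prod_rising_mul_prod_falling qBracket (b := a * n) hn hj
  rw [show ((a : ℤ) + 1) * n = ((a * n + n : ℕ) : ℤ) by push_cast; ring]
  unfold qFact
  linear_combination
    (QQ ^ j / ((∏ i ∈ Icc 1 j, qBracket i) * ∏ i ∈ Icc 1 (n - j), qBracket i)) * key
end

section
/- For every positive integer $m$, the rational number $d_{m,m}=\frac{1}{2m^2}\sum_{l\mid m}(-1)^l\,\mu(m/l)\binom{2l}{l}$ is an integer. -/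
/-
Write `b l = (-1) ^ l * centralBinom l`. If `p ∣ m`, Möbius terms pair up across the prime `p`:
`∑_{l ∣ m} μ (m / l) b l = ∑_{e ∣ m, p ∤ e} μ e (b (p N) - b N)` with `m / e = p N`, and
`p ^ j ∣ 2 m²` forces `p ^ j ∣ 2 (p N)²`. So it suffices that `p ^ j ∣ 2 (p N)²` implies
`p ^ j ∣ b (p N) - b N` (if `p ∤ m`, only `p = 2` matters, and every `b l` is even).

Comparing factorials, `C(2pN, pN) ∏ i = C(2N, N) ∏ (pN + i)` with both products over
`0 < i ≤ pN`, `p ∤ i`. Pairing `i` with `pN - i`, `(pN + i)(2pN - i) = i (pN - i) + 2 (pN)²`,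
so the two products agree modulo `p ^ j`, and the first is a unit there. For `p = 2` and `N`
odd the pairing has a fixed point, giving `C(4N, 2N) ≡ 3 C(2N, N) mod 8` instead, which
suffices since `C(2N, N)` is even.
-/

open Finset Nat ArithmeticFunction
open scoped ArithmeticFunction.Moebius

theorem prod_Ioc_zero_id_eq_factorial (n : ℕ) : ∏ i ∈ Ioc 0 n, i = n ! := by
  induction n with
  | zero => rfl
  | succ n ih => rw [prod_Ioc_succ_top n.zero_le, ih, factorial_succ, mul_comm]

theorem prod_Ioc_add_self (c : ℕ) : ∏ i ∈ Ioc 0 c, (c + i) = centralBinom c * c ! := by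
  have hshift : ∏ i ∈ Ioc 0 c, (c + i) = ∏ i ∈ Ioc c (2 * c), i := by
    rw [two_mul, show Ioc c (c + c) = (Ioc 0 c).map (addLeftEmbedding c) by simp, prod_map]
    rfl
  have h := prod_Ioc_consecutive id c.zero_le (by omega : c ≤ 2 * c)
  simp only [id, prod_Ioc_zero_id_eq_factorial] at h
  have hc := choose_mul_factorial_mul_factorial (by omega : c ≤ 2 * c)
  rw [show 2 * c - c = c by omega, ← centralBinom_eq_two_mul_choose, ← h] at hc
  exact mul_left_cancel₀ (factorial_ne_zero c) (by rw [hshift]; linarith)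

def primeToIoc (p c : ℕ) : Finset ℕ := {i ∈ Ioc 0 c | ¬ p ∣ i}

theorem mem_primeToIoc {p c i : ℕ} :
    i ∈ primeToIoc p c ↔ (0 < i ∧ i ≤ c) ∧ ¬ p ∣ i := by
  simp [primeToIoc]

theorem sub_mem_primeToIoc {p c i : ℕ} (hpc : p ∣ c) (hi : i ∈ primeToIoc p c) :
    c - i ∈ primeToIoc p c := by
  obtain ⟨⟨hi0, hic⟩, hpi⟩ := mem_primeToIoc.mp hi
  have hne : i ≠ c := by rintro rfl; exact hpi hpc
  refine mem_primeToIoc.mpr ⟨by omega, fun h => hpi ?_⟩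
  simpa [Nat.sub_sub_self hic] using Nat.dvd_sub hpc h

theorem prod_Ioc_mul_eq_mul_prod_primeToIoc {M : Type*} [CommMonoid M] {p : ℕ} (hp : 0 < p)
    (N : ℕ) (f : ℕ → M) :
    ∏ i ∈ Ioc 0 (p * N), f i
      = (∏ j ∈ Ioc 0 N, f (p * j)) * ∏ i ∈ primeToIoc p (p * N), f i := by
  have hmultiples : {i ∈ Ioc 0 (p * N) | p ∣ i} = (Ioc 0 N).image (p * ·) := by
    ext i
    simp only [mem_filter, mem_Ioc, mem_image]
    constructor
    · rintro ⟨⟨hi, hiN⟩, j, rfl⟩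
      exact ⟨j, ⟨Nat.pos_of_mul_pos_left hi, Nat.le_of_mul_le_mul_left hiN hp⟩, rfl⟩
    · rintro ⟨j, ⟨hj, hjN⟩, rfl⟩
      exact ⟨⟨Nat.mul_pos hp hj, Nat.mul_le_mul_left p hjN⟩, dvd_mul_right p j⟩
  rw [← prod_filter_mul_prod_filter_not (Ioc 0 (p * N)) (p ∣ ·), hmultiples,
    prod_image fun a _ b _ h => Nat.eq_of_mul_eq_mul_left hp h]
  rfl

theorem centralBinom_mul_prod_primeToIoc {p : ℕ} (hp : 0 < p) (N : ℕ) :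
    centralBinom (p * N) * ∏ i ∈ primeToIoc p (p * N), i
      = centralBinom N * ∏ i ∈ primeToIoc p (p * N), (p * N + i) := by
  have hfac : (p * N)! = p ^ N * N ! * ∏ i ∈ primeToIoc p (p * N), i := by
    rw [← prod_Ioc_zero_id_eq_factorial, prod_Ioc_mul_eq_mul_prod_primeToIoc hp,
      prod_mul_distrib, prod_const, prod_Ioc_zero_id_eq_factorial, card_Ioc, Nat.sub_zero]
  have hcent : centralBinom (p * N) * (p * N)!
      = p ^ N * (centralBinom N * N !) * ∏ i ∈ primeToIoc p (p * N), (p * N + i) := by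
    simp_rw [← prod_Ioc_add_self, prod_Ioc_mul_eq_mul_prod_primeToIoc hp, ← mul_add,
      prod_mul_distrib, prod_const, card_Ioc, Nat.sub_zero]
  have hpos : 0 < p ^ N * N ! := by positivity
  apply Nat.eq_of_mul_eq_mul_left hpos
  rw [hfac] at hcent
  linarith

theorem prod_eq_prod_filter_two_mul_lt {M : Type*} [CommMonoid M] {c : ℕ} {s : Finset ℕ}
    (hle : ∀ i ∈ s, i ≤ c) (hsymm : ∀ i ∈ s, c - i ∈ s) (hfix : ∀ i ∈ s, 2 * i ≠ c)
    (f : ℕ → M) : ∏ i ∈ s, f i = ∏ i ∈ s with 2 * i < c, f i * f (c - i) := by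
  rw [prod_mul_distrib, ← prod_filter_mul_prod_filter_not s (2 * · < c)]
  congr 1
  refine prod_nbij' (c - ·) (c - ·) ?_ ?_ ?_ ?_ ?_ <;> simp only [mem_filter]
  · intro i ⟨hi, hlt⟩
    exact ⟨hsymm i hi, by have := hle i hi; have := hfix i hi; omega⟩
  · intro i ⟨hi, hlt⟩
    exact ⟨hsymm i hi, by omega⟩
  · intro i ⟨hi, _⟩
    have := hle i hi; omega
  · intro i ⟨hi, _⟩
    have := hle i hi; omega
  · intro i ⟨hi, _⟩
    rw [Nat.sub_sub_self (hle i hi)]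

theorem prod_add_eq_prod_of_two_mul_sq_eq_zero {R : Type*} [CommRing R] {c : ℕ} {s : Finset ℕ}
    (hc : 2 * (c : R) ^ 2 = 0) (hle : ∀ i ∈ s, i ≤ c) (hsymm : ∀ i ∈ s, c - i ∈ s)
    (hfix : ∀ i ∈ s, 2 * i ≠ c) : ∏ i ∈ s, ((c : R) + i) = ∏ i ∈ s, (i : R) := by
  simp only [prod_eq_prod_filter_two_mul_lt hle hsymm hfix]
  refine prod_congr rfl fun i hi => ?_
  rw [Nat.cast_sub (hle i (mem_filter.mp hi).1)]
  linear_combination hc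

theorem isUnit_prod_primeToIoc {p : ℕ} (hp : p.Prime) (j c : ℕ) :
    IsUnit (∏ i ∈ primeToIoc p c, (i : ZMod (p ^ j))) := by
  rw [← Nat.cast_prod, ZMod.isUnit_iff_coprime]
  exact Nat.Coprime.prod_left fun i hi =>
    (Nat.Coprime.pow_left j ((hp.coprime_iff_not_dvd).mpr (mem_primeToIoc.mp hi).2)).symm

theorem natCast_centralBinom_mul_eq {p j N : ℕ} (hp : p.Prime) (hj : p ^ j ∣ 2 * (p * N) ^ 2)
    (hpN : p ≠ 2 ∨ Even N) :
    (centralBinom (p * N) : ZMod (p ^ j)) = centralBinom N := by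
  have hc : 2 * ((p * N : ℕ) : ZMod (p ^ j)) ^ 2 = 0 := by
    exact_mod_cast (ZMod.natCast_eq_zero_iff _ _).mpr hj
  have hfix : ∀ i ∈ primeToIoc p (p * N), 2 * i ≠ p * N := by
    intro i hi h
    have hpi := (mem_primeToIoc.mp hi).2
    have hp2 : p = 2 := by
      have : p ∣ 2 * i := h ▸ dvd_mul_right p N
      exact (Nat.prime_dvd_prime_iff_eq hp prime_two).mp
        ((hp.dvd_mul.mp this).resolve_right hpi)
    subst hp2
    obtain ⟨k, rfl⟩ := hpN.resolve_left (not_not.mpr rfl)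
    exact hpi ⟨k, by omega⟩
  have hpair := prod_add_eq_prod_of_two_mul_sq_eq_zero hc
    (fun i hi => (mem_primeToIoc.mp hi).1.2)
    (fun i hi => sub_mem_primeToIoc (dvd_mul_right p N) hi) hfix
  have key := congrArg (Nat.cast : ℕ → ZMod (p ^ j))
    (centralBinom_mul_prod_primeToIoc hp.pos N)
  push_cast at key hpair
  rw [hpair] at key
  exact (isUnit_prod_primeToIoc hp j _).mul_right_cancel key

-- `i ↦ 2N - i` fixes `N`, whose factor `(2N + N) / N = 3` survives the pairing.
theorem natCast_centralBinom_two_mul_eq {N : ℕ} (hN : Odd N) :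
    (centralBinom (2 * N) : ZMod (2 ^ 3)) = 3 * centralBinom N := by
  set P := primeToIoc 2 (2 * N)
  have hNP : N ∈ P := mem_primeToIoc.mpr ⟨⟨hN.pos, by omega⟩, hN.not_two_dvd_nat⟩
  have hc : 2 * ((2 * N : ℕ) : ZMod (2 ^ 3)) ^ 2 = 0 := by
    exact_mod_cast (ZMod.natCast_eq_zero_iff _ (2 ^ 3)).mpr ⟨N ^ 2, by ring⟩
  have hsymm : ∀ i ∈ P.erase N, 2 * N - i ∈ P.erase N := by
    intro i hi
    obtain ⟨hiN, hiP⟩ := mem_erase.mp hi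
    have := (mem_primeToIoc.mp hiP).1
    exact mem_erase.mpr ⟨by omega, sub_mem_primeToIoc (dvd_mul_right 2 N) hiP⟩
  have hpair := prod_add_eq_prod_of_two_mul_sq_eq_zero hc
    (fun i hi => (mem_primeToIoc.mp (mem_of_mem_erase hi)).1.2) hsymm
    (fun i hi h => ne_of_mem_erase hi (by omega))
  have key := congrArg (Nat.cast : ℕ → ZMod (2 ^ 3))
    (centralBinom_mul_prod_primeToIoc two_pos N)
  have hunit := isUnit_prod_primeToIoc prime_two 3 (2 * N)
  rw [← mul_prod_erase _ _ hNP] at hunit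
  push_cast at key hpair
  rw [← mul_prod_erase _ _ hNP, ← mul_prod_erase _ _ hNP, hpair] at key
  exact hunit.mul_right_cancel (by linear_combination key)

def signedCentralBinom (n : ℕ) : ℤ := (-1) ^ n * centralBinom n

theorem two_dvd_signedCentralBinom {n : ℕ} (hn : 0 < n) : 2 ∣ signedCentralBinom n :=
  dvd_mul_of_dvd_right (by exact_mod_cast two_dvd_centralBinom_of_one_le hn) _

theorem prime_pow_dvd_signedCentralBinom_mul_sub {p j N : ℕ} (hp : p.Prime)
    (hj : p ^ j ∣ 2 * (p * N) ^ 2) :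
    (p : ℤ) ^ j ∣ signedCentralBinom (p * N) - signedCentralBinom N := by
  by_cases hpN : p ≠ 2 ∨ Even N
  · have hsign : (-1 : ℤ) ^ (p * N) = (-1) ^ N := by
      rcases hpN with hp2 | hN
      · rw [pow_mul, (hp.odd_of_ne_two hp2).neg_one_pow]
      · rw [hN.neg_one_pow, (hN.mul_left p).neg_one_pow]
    have h := (ZMod.intCast_eq_intCast_iff_dvd_sub (centralBinom N) (centralBinom (p * N))
      (p ^ j)).mp (by exact_mod_cast (natCast_centralBinom_mul_eq hp hj hpN).symm)
    rw [signedCentralBinom, signedCentralBinom, hsign, ← mul_sub]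
    exact dvd_mul_of_dvd_right (by exact_mod_cast h) _
  · obtain ⟨rfl, hN⟩ : p = 2 ∧ Odd N := by
      push Not at hpN
      exact ⟨hpN.1, Nat.not_even_iff_odd.mp hpN.2⟩
    have hj8 : 2 ^ j ∣ 2 ^ 3 := by
      rw [show 2 * (2 * N) ^ 2 = 2 ^ 3 * N ^ 2 by ring] at hj
      exact ((Nat.coprime_two_left.mpr hN).pow j 2).dvd_of_dvd_mul_right hj
    have h := (ZMod.intCast_eq_intCast_iff_dvd_sub (3 * centralBinom N) (centralBinom (2 * N))
      (2 ^ 3)).mp (by exact_mod_cast (natCast_centralBinom_two_mul_eq hN).symm)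
    obtain ⟨t, ht⟩ := two_dvd_centralBinom_of_one_le hN.pos
    have h8 : ((2 ^ 3 : ℕ) : ℤ) ∣ signedCentralBinom (2 * N) - signedCentralBinom N := by
      have hsplit : signedCentralBinom (2 * N) - signedCentralBinom N
          = (centralBinom (2 * N) - 3 * centralBinom N : ℤ) + (2 ^ 3 : ℕ) * t := by
        rw [signedCentralBinom, signedCentralBinom, (even_two_mul N).neg_one_pow, hN.neg_one_pow,
          ht]
        push_cast
        ring
      rw [hsplit]
      exact dvd_add (by exact_mod_cast h) (dvd_mul_right _ _)
    exact_mod_cast (Int.natCast_dvd_natCast.mpr hj8).trans h8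

theorem moebius_prime_mul {p e : ℕ} (hp : p.Prime) (hpe : ¬ p ∣ e) : μ (p * e) = -μ e := by
  rw [isMultiplicative_moebius.map_mul_of_coprime ((hp.coprime_iff_not_dvd).mpr hpe),
    moebius_apply_prime hp, neg_one_mul]

theorem moebius_prime_mul_of_dvd {p e : ℕ} (hp : p.Prime) (hpe : p ∣ e) : μ (p * e) = 0 :=
  moebius_eq_zero_of_not_squarefree fun h =>
    hp.not_isUnit (h p (mul_dvd_mul_left p hpe))

theorem sum_divisors_moebius_smul_eq {M : Type*} [AddCommGroup M] {p m : ℕ} (hp : p.Prime)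
    (hpm : p ∣ m) (f : ℕ → M) :
    ∑ e ∈ m.divisors, μ e • f e = ∑ e ∈ m.divisors with ¬ p ∣ e, μ e • (f e - f (p * e)) := by
  have hmul : ∀ e ∈ m.divisors, ¬ p ∣ e → p * e ∈ m.divisors := fun e he hpe =>
    mem_divisors.mpr ⟨((hp.coprime_iff_not_dvd).mpr hpe).mul_dvd_of_dvd_of_dvd hpm
      (mem_divisors.mp he).1, (mem_divisors.mp he).2⟩
  have hdvd : ∑ e ∈ m.divisors with p ∣ e, μ e • f e
      = ∑ e ∈ m.divisors with ¬ p ∣ e, μ (p * e) • f (p * e) := by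
    rw [← sum_image (f := fun e => μ e • f e)
      fun a _ b _ h => Nat.eq_of_mul_eq_mul_left hp.pos h]
    refine (sum_subset ?_ ?_).symm
    · intro e he
      obtain ⟨e', he', rfl⟩ := mem_image.mp he
      obtain ⟨he'm, hpe'⟩ := mem_filter.mp he'
      exact mem_filter.mpr ⟨hmul e' he'm hpe', dvd_mul_right p e'⟩
    · intro e he hnot
      obtain ⟨hem, e', rfl⟩ := mem_filter.mp he
      have he'm : e' ∈ m.divisors := mem_divisors.mpr
        ⟨(dvd_mul_left e' p).trans (mem_divisors.mp hem).1, (mem_divisors.mp hem).2⟩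
      have hpe' : p ∣ e' := by
        by_contra hpe'
        exact hnot (mem_image.mpr ⟨e', mem_filter.mpr ⟨he'm, hpe'⟩, rfl⟩)
      rw [moebius_prime_mul_of_dvd hp hpe', zero_smul]
  rw [← sum_filter_not_add_sum_filter _ (p ∣ ·), hdvd, ← sum_add_distrib]
  refine sum_congr rfl fun e he => ?_
  rw [moebius_prime_mul hp (mem_filter.mp he).2, smul_sub, neg_smul, sub_eq_add_neg]

theorem prime_pow_dvd_sum_moebius_signedCentralBinom_div {p j m : ℕ} (hp : p.Prime)
    (hpj : p ^ j ∣ 2 * m ^ 2) :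
    (p : ℤ) ^ j ∣ ∑ e ∈ m.divisors, μ e * signedCentralBinom (m / e) := by
  by_cases hpm : p ∣ m
  · have h := sum_divisors_moebius_smul_eq hp hpm fun e => signedCentralBinom (m / e)
    simp only [smul_eq_mul] at h
    rw [h]
    refine dvd_sum fun e he => dvd_mul_of_dvd_right ?_ _
    obtain ⟨hem, hpe⟩ := mem_filter.mp he
    have hcop := (hp.coprime_iff_not_dvd).mpr hpe
    obtain ⟨N, rfl⟩ := hcop.mul_dvd_of_dvd_of_dvd hpm (mem_divisors.mp hem).1
    have he0 : 0 < e := Nat.pos_of_mem_divisors hem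
    have hdiv : p * e * N / e = p * N := by rw [mul_right_comm, Nat.mul_div_cancel _ he0]
    have hdiv' : p * e * N / (p * e) = N :=
      Nat.mul_div_cancel_left N (Nat.mul_pos hp.pos he0)
    rw [hdiv, hdiv']
    refine prime_pow_dvd_signedCentralBinom_mul_sub hp
      ((hcop.pow j 2).dvd_of_dvd_mul_right ?_)
    convert hpj using 1
    ring
  · have h2 : p ^ j ∣ 2 := (((hp.coprime_iff_not_dvd).mpr hpm).pow j 2).dvd_of_dvd_mul_right hpj
    refine (show (p : ℤ) ^ j ∣ 2 by exact_mod_cast h2).trans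
      (dvd_sum fun e he => dvd_mul_of_dvd_right ?_ _)
    exact two_dvd_signedCentralBinom (Nat.div_pos (divisor_le he) (Nat.pos_of_mem_divisors he))

theorem two_mul_sq_dvd_sum_moebius_signedCentralBinom (m : ℕ) :
    (2 * m ^ 2 : ℤ) ∣ ∑ l ∈ m.divisors, μ (m / l) * signedCentralBinom l := by
  rcases eq_or_ne m 0 with rfl | hm
  · simp
  rw [← Nat.sum_div_divisors,
    sum_congr rfl fun e he => by rw [Nat.div_div_self (mem_divisors.mp he).1 hm]]
  suffices h : 2 * m ^ 2 ∣ (∑ e ∈ m.divisors, μ e * signedCentralBinom (m / e)).natAbs by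
    exact_mod_cast Int.natCast_dvd.mpr h
  exact (Nat.dvd_iff_prime_pow_dvd_dvd _ _).mpr fun p j hp hpj => Int.natCast_dvd.mp
    (by exact_mod_cast prime_pow_dvd_sum_moebius_signedCentralBinom_div hp hpj)

/-- For every positive integer `m`, the rational number
`d_{m,m} = (1/(2m²)) ∑_{l | m} (-1)^l μ(m/l) (2l choose l)` is an integer;
equivalently `2m²` divides the sum. -/
theorem dmm_is_integer (m : ℕ) (hm : 0 < m) :
    ∃ d : ℤ,
      (1 / (2 * (m : ℚ) ^ 2)) *
          (∑ l ∈ m.divisors, (-1 : ℚ) ^ l * (moebius (m / l) : ℚ) * ((2 * l).choose l : ℚ))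
        = (d : ℚ) := by
  obtain ⟨d, hd⟩ := two_mul_sq_dvd_sum_moebius_signedCentralBinom m
  refine ⟨d, ?_⟩
  have hsum : ∑ l ∈ m.divisors, (-1 : ℚ) ^ l * (moebius (m / l) : ℚ) * ((2 * l).choose l : ℚ)
      = ((2 * m ^ 2 * d : ℤ) : ℚ) := by
    rw [← hd]
    push_cast [signedCentralBinom, centralBinom_eq_two_mul_choose]
    exact sum_congr rfl fun l _ => by ring
  have hm0 : (m : ℚ) ≠ 0 := by exact_mod_cast hm.ne'
  rw [hsum]
  push_cast
  field_simp
end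

section
/- In the formal power series ring $\mathbb{Q}[[t]]$, the identity $\log\left(\tfrac{1}{2}+\tfrac{1}{2}\sqrt{1+t^2}\right) = -\sum_{j=1}^{\infty}(-1)^j\frac{(2j-1)!}{j!\,j!}\left(\frac{t}{2}\right)^{2j}$ holds, where $\sqrt{1+t^2}$ denotes the formal power series $(1+t^2)^{1/2}$ and $\log$ the formal logarithm. -/
open PowerSeries Finset

/-- Formal exponential of a power series with zero constant term. -/
noncomputable def expPS (f : PowerSeries ℚ) : PowerSeries ℚ :=
  PowerSeries.mk fun n =>
    ∑ k ∈ Finset.range (n + 1), ((k.factorial : ℚ)⁻¹) • PowerSeries.coeff n (f ^ k)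

/-- Formal logarithm `log (1 + u) = ∑_{j ≥ 1} (-1)^{j-1} u^j / j`
for `u` with zero constant term. -/
noncomputable def logOnePlus (u : PowerSeries ℚ) : PowerSeries ℚ :=
  PowerSeries.mk fun n =>
    ∑ j ∈ Finset.range (n + 1), (((-1 : ℚ) ^ (j - 1)) / j) • PowerSeries.coeff n (u ^ j)

/-- `√(1+t²) = exp((1/2)·log(1+t²))`. -/
noncomputable def sqrtOnePlusTSq : PowerSeries ℚ :=
  expPS ((1 / 2 : ℚ) • logOnePlus (PowerSeries.X ^ 2))

/-! Both sides vanish at `t = 0`, so it suffices to compare derivatives. Since `expPS` and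
`logOnePlus` are substitutions into `exp` and `log`, the chain rule applies: with `s = √(1+t²)`
it gives `(1 + t²) s' = t s`, hence `s² = 1 + t²` and `s s' = t`, and
`(1 + s) · log((1 + s)/2)' = s'`. For the right-hand side `g`, the series `1 - t g'` is
`q = ∑ₖ (-1)ᵏ C(2k, k) (t/2)^(2k)`, which satisfies `(1 + t²) q' = -t q`, so that `s q = 1`;
this gives `(1 + s) g' = s'` as well. Each identity between two solutions of the same first-order
linear equation `b f' = a f` comes from the vanishing of `(g/f)'`. -/

namespace PowerSeries

theorem coeff_subst_eq_sum {R : Type*} [CommRing R] {u : R⟦X⟧} (hu : constantCoeff u = 0)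
    (f : R⟦X⟧) (n : ℕ) :
    coeff n (f.subst u) = ∑ d ∈ range (n + 1), coeff d f * coeff n (u ^ d) := by
  rw [coeff_subst' (HasSubst.of_constantCoeff_zero' hu)]
  simp only [smul_eq_mul]
  refine finsum_eq_sum_of_support_subset _ <| Function.support_subset_iff'.mpr fun d hd => ?_
  rw [coeff_of_lt_order (φ := u ^ d) n, mul_zero]
  grw [← le_order_pow_of_constantCoeff_eq_zero d hu]
  simp_all

theorem one_add_X_mul_derivative_log (A : Type*) [CommRing A] [Algebra ℚ A] :
    (1 + X) * d⁄dX A (log A) = 1 := by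
  ext n
  rw [deriv_log, add_mul, one_mul, map_add]
  rcases n with _ | n
  · simp
  · rw [coeff_succ_X_mul]
    simp [pow_succ]

theorem derivative_X_sq {R : Type*} [CommSemiring R] : d⁄dX R (X ^ 2 : R⟦X⟧) = 2 * X := by
  simp

theorem one_add_X_sq_ne_zero {R : Type*} [CommRing R] [Nontrivial R] :
    (1 + X ^ 2 : R⟦X⟧) ≠ 0 := fun h => by
  simpa using congrArg constantCoeff h

theorem eq_of_mul_derivative_eq_mul {K : Type*} [Field K] [CharZero K] {a b f g : K⟦X⟧}
    (hb : b ≠ 0) (hf : b * d⁄dX K f = a * f) (hg : b * d⁄dX K g = a * g)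
    (hf0 : constantCoeff f ≠ 0) (h0 : constantCoeff g = constantCoeff f) : g = f := by
  have hf_ne : f ≠ 0 := fun h => hf0 (by simp [h])
  have hf_inv : f * f⁻¹ = 1 := PowerSeries.mul_inv_cancel f hf0
  have hwronskian : b * f ^ 2 * d⁄dX K (g * f⁻¹) = 0 := by
    rw [Derivation.leibniz, derivative_inv', smul_eq_mul, smul_eq_mul]
    linear_combination (-g) * hf + f * hg
      + (f * b * d⁄dX K g - g * b * d⁄dX K f * (f * f⁻¹ + 1)) * hf_inv
  have hquotient : g * f⁻¹ = 1 := by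
    refine derivative.ext ?_ ?_
    · simpa using
        (mul_eq_zero.mp hwronskian).resolve_left (mul_ne_zero hb (pow_ne_zero 2 hf_ne))
    · simp [h0, hf0]
  linear_combination f * hquotient - g * hf_inv

end PowerSeries

theorem logOnePlus_eq_subst {u : ℚ⟦X⟧} (hu : constantCoeff u = 0) :
    logOnePlus u = (log ℚ).subst u := by
  ext n
  rw [logOnePlus, coeff_mk, coeff_subst_eq_sum hu]
  refine sum_congr rfl fun d _ => ?_
  rcases d with _ | d
  · simp
  · simp [pow_succ]

theorem expPS_eq_subst {f : ℚ⟦X⟧} (hf : constantCoeff f = 0) :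
    expPS f = (exp ℚ).subst f := by
  ext n
  rw [expPS, coeff_mk, coeff_subst_eq_sum hf]
  simp

theorem constantCoeff_logOnePlus (u : ℚ⟦X⟧) : constantCoeff (logOnePlus u) = 0 := by
  rw [← coeff_zero_eq_constantCoeff_apply]
  simp [logOnePlus]

theorem constantCoeff_expPS (f : ℚ⟦X⟧) : constantCoeff (expPS f) = 1 := by
  rw [← coeff_zero_eq_constantCoeff_apply]
  simp [expPS]

theorem one_add_mul_derivative_logOnePlus {u : ℚ⟦X⟧} (hu : constantCoeff u = 0) :
    (1 + u) * d⁄dX ℚ (logOnePlus u) = d⁄dX ℚ u := by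
  have hsubst := HasSubst.of_constantCoeff_zero' hu
  have hinv : (1 + u) * (d⁄dX ℚ (log ℚ)).subst u = 1 := by
    have := congrArg (substAlgHom (R := ℚ) hsubst) (one_add_X_mul_derivative_log ℚ)
    rwa [map_mul, map_add, map_one, substAlgHom_X, coe_substAlgHom] at this
  rw [logOnePlus_eq_subst hu, derivative_subst hsubst, ← mul_assoc, hinv, one_mul]

theorem derivative_expPS {f : ℚ⟦X⟧} (hf : constantCoeff f = 0) :
    d⁄dX ℚ (expPS f) = expPS f * d⁄dX ℚ f := by
  rw [expPS_eq_subst hf, derivative_subst (HasSubst.of_constantCoeff_zero' hf), derivative_exp]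

theorem constantCoeff_sqrtOnePlusTSq : constantCoeff sqrtOnePlusTSq = 1 :=
  constantCoeff_expPS _

theorem one_add_X_sq_mul_derivative_sqrtOnePlusTSq :
    (1 + X ^ 2) * d⁄dX ℚ sqrtOnePlusTSq = X * sqrtOnePlusTSq := by
  have hlog := one_add_mul_derivative_logOnePlus (u := X ^ 2) (by simp)
  have half : C (1 / 2 : ℚ) * 2 = 1 := by rw [← map_ofNat C 2, ← map_mul]; norm_num
  rw [derivative_X_sq] at hlog
  rw [sqrtOnePlusTSq, derivative_expPS (by simp [constantCoeff_logOnePlus]), Derivation.map_smul]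
  set e := expPS ((1 / 2 : ℚ) • logOnePlus (X ^ 2))
  rw [smul_eq_C_mul]
  linear_combination (e * C (1 / 2 : ℚ)) * hlog + (X * e) * half

theorem sqrtOnePlusTSq_sq : sqrtOnePlusTSq ^ 2 = 1 + X ^ 2 := by
  refine eq_of_mul_derivative_eq_mul (a := 2 * X) one_add_X_sq_ne_zero ?_ ?_ (by simp) ?_
  · rw [map_add, derivative_X_sq, derivative_one]
    ring
  · rw [derivative_pow]
    linear_combination 2 * sqrtOnePlusTSq * one_add_X_sq_mul_derivative_sqrtOnePlusTSq
  · simp [constantCoeff_sqrtOnePlusTSq]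

theorem sqrtOnePlusTSq_mul_derivative : sqrtOnePlusTSq * d⁄dX ℚ sqrtOnePlusTSq = X := by
  refine mul_left_cancel₀ one_add_X_sq_ne_zero ?_
  linear_combination sqrtOnePlusTSq * one_add_X_sq_mul_derivative_sqrtOnePlusTSq
    + X * sqrtOnePlusTSq_sq

/-- The binomial series `(1 + t²)^(-1/2) = ∑ₖ (-1)ᵏ C(2k, k) (t/2)^(2k)`. -/
noncomputable def invSqrtOnePlusTSq : ℚ⟦X⟧ :=
  mk fun n => if n % 2 = 1 then 0 else (-1) ^ (n / 2) * (n / 2).centralBinom / 4 ^ (n / 2)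

theorem coeff_invSqrtOnePlusTSq_two_mul (k : ℕ) :
    coeff (2 * k) invSqrtOnePlusTSq = (-1) ^ k * k.centralBinom / 4 ^ k := by
  simp [invSqrtOnePlusTSq]

theorem coeff_invSqrtOnePlusTSq_two_mul_add_one (k : ℕ) :
    coeff (2 * k + 1) invSqrtOnePlusTSq = 0 := by
  simp [invSqrtOnePlusTSq, Nat.add_mod]

theorem coeff_invSqrtOnePlusTSq_add_two (n : ℕ) :
    (n + 2) * coeff (n + 2) invSqrtOnePlusTSq = -(n + 1) * coeff n invSqrtOnePlusTSq := by
  obtain ⟨k, rfl | rfl⟩ := Nat.even_or_odd' n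
  · have h := congrArg (Nat.cast : ℕ → ℚ) (Nat.succ_mul_centralBinom_succ k)
    push_cast at h
    rw [show 2 * k + 2 = 2 * (k + 1) by ring, coeff_invSqrtOnePlusTSq_two_mul,
      coeff_invSqrtOnePlusTSq_two_mul]
    push_cast
    field_simp
    linear_combination 2 * (-1) ^ (k + 1) * 4 ^ k * h
  · rw [show 2 * k + 1 + 2 = 2 * (k + 1) + 1 by ring, coeff_invSqrtOnePlusTSq_two_mul_add_one,
      coeff_invSqrtOnePlusTSq_two_mul_add_one]
    ring

theorem one_add_X_sq_mul_derivative_invSqrtOnePlusTSq :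
    (1 + X ^ 2) * d⁄dX ℚ invSqrtOnePlusTSq = -(X * invSqrtOnePlusTSq) := by
  ext n
  rw [add_mul, one_mul, map_add, map_neg]
  rcases n with _ | _ | n
  · simp [coeff_derivative, coeff_invSqrtOnePlusTSq_two_mul_add_one 0]
  · rw [coeff_derivative, coeff_succ_X_mul, coeff_X_pow_mul', if_neg (by norm_num), add_zero]
    linear_combination coeff_invSqrtOnePlusTSq_add_two 0
  · rw [coeff_derivative, coeff_succ_X_mul, coeff_X_pow_mul _ 2 n,
      coeff_derivative]
    have h := coeff_invSqrtOnePlusTSq_add_two (n + 1)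
    push_cast at h ⊢
    linear_combination h

theorem sqrtOnePlusTSq_mul_invSqrtOnePlusTSq : sqrtOnePlusTSq * invSqrtOnePlusTSq = 1 := by
  refine eq_of_mul_derivative_eq_mul (a := 0) one_add_X_sq_ne_zero ?_ ?_ (by simp) ?_
  · simp
  · rw [Derivation.leibniz, smul_eq_mul, smul_eq_mul]
    linear_combination sqrtOnePlusTSq * one_add_X_sq_mul_derivative_invSqrtOnePlusTSq
      + invSqrtOnePlusTSq * one_add_X_sq_mul_derivative_sqrtOnePlusTSq
  · simp [constantCoeff_sqrtOnePlusTSq, invSqrtOnePlusTSq]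

/-- At `n = 2j ≠ 0` this is `-(-1)ʲ C(2j, j) / (2j · 4ʲ)`. -/
def centralBinomLogCoeff (n : ℕ) : ℚ :=
  if n = 0 ∨ n % 2 = 1 then 0
  else -((-1 : ℚ) ^ (n / 2) * ((n - 1).factorial : ℚ) /
    (((n / 2).factorial : ℚ) ^ 2 * 2 ^ n))

theorem natCast_mul_centralBinomLogCoeff {n : ℕ} (hn : n ≠ 0) :
    n * centralBinomLogCoeff n = -coeff n invSqrtOnePlusTSq := by
  obtain ⟨k, rfl | rfl⟩ := Nat.even_or_odd' n
  · obtain ⟨k, rfl⟩ : ∃ j, k = j + 1 := Nat.exists_eq_add_one.mpr (by omega)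
    rw [coeff_invSqrtOnePlusTSq_two_mul, centralBinomLogCoeff, if_neg (by omega),
      Nat.centralBinom_eq_two_mul_choose, Nat.cast_choose ℚ (by omega)]
    rw [show 2 * (k + 1) / 2 = k + 1 by omega, show 2 * (k + 1) - 1 = 2 * k + 1 by omega,
      show 2 * (k + 1) - (k + 1) = k + 1 by omega, pow_mul,
      show 2 * (k + 1) = 2 * k + 1 + 1 by ring, Nat.factorial_succ (2 * k + 1)]
    push_cast
    field_simp
    ring
  · rw [coeff_invSqrtOnePlusTSq_two_mul_add_one, centralBinomLogCoeff, if_pos (by omega)]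
    simp

theorem X_mul_derivative_centralBinomLogCoeff :
    X * d⁄dX ℚ (mk centralBinomLogCoeff) = 1 - invSqrtOnePlusTSq := by
  ext n
  rcases n with _ | n
  · simp [invSqrtOnePlusTSq]
  · rw [coeff_succ_X_mul, coeff_derivative, coeff_mk, map_sub, coeff_one, if_neg n.succ_ne_zero,
      zero_sub, ← natCast_mul_centralBinomLogCoeff n.succ_ne_zero]
    push_cast
    ring

theorem one_add_sqrtOnePlusTSq_mul_derivative_centralBinomLogCoeff :
    (1 + sqrtOnePlusTSq) * d⁄dX ℚ (mk centralBinomLogCoeff) = d⁄dX ℚ sqrtOnePlusTSq := by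
  have hXs : X * sqrtOnePlusTSq ≠ 0 := mul_ne_zero X_ne_zero fun h => by
    simpa [constantCoeff_sqrtOnePlusTSq] using congrArg constantCoeff h
  refine mul_left_cancel₀ hXs ?_
  linear_combination sqrtOnePlusTSq * (1 + sqrtOnePlusTSq) * X_mul_derivative_centralBinomLogCoeff
    - (1 + sqrtOnePlusTSq) * sqrtOnePlusTSq_mul_invSqrtOnePlusTSq + sqrtOnePlusTSq_sq
    - X * sqrtOnePlusTSq_mul_derivative

/-- `log(1/2 + (1/2)√(1+t²)) = -∑_{j≥1} (-1)^j (2j-1)!/(j!j!) (t/2)^{2j}`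
in `ℚ[[t]]`. -/
theorem log_half_add_half_sqrt :
    logOnePlus (PowerSeries.C (1 / 2 : ℚ) + PowerSeries.C (1 / 2 : ℚ) * sqrtOnePlusTSq - 1)
      = PowerSeries.mk fun n =>
          if n = 0 ∨ n % 2 = 1 then 0
          else -((-1 : ℚ) ^ (n / 2) * ((n - 1).factorial : ℚ) /
            (((n / 2).factorial : ℚ) ^ 2 * 2 ^ n)) := by
  set s := sqrtOnePlusTSq
  set u : ℚ⟦X⟧ := C (1 / 2 : ℚ) + C (1 / 2 : ℚ) * s - 1
  have hu : constantCoeff u = 0 := by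
    norm_num [u, s, constantCoeff_sqrtOnePlusTSq]
  have hlog : (1 + u) * d⁄dX ℚ (logOnePlus u) = C (1 / 2 : ℚ) * d⁄dX ℚ s := by
    rw [one_add_mul_derivative_logOnePlus hu]
    simp [u]
  have hC : C (1 / 2 : ℚ) * (1 + s) ≠ 0 := fun h => by
    simpa [s, constantCoeff_sqrtOnePlusTSq] using congrArg constantCoeff h
  have hD : d⁄dX ℚ (logOnePlus u) = d⁄dX ℚ (mk centralBinomLogCoeff) := by
    refine mul_left_cancel₀ hC ?_
    linear_combination
      hlog - C (1 / 2 : ℚ) * one_add_sqrtOnePlusTSq_mul_derivative_centralBinomLogCoeff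
  exact derivative.ext hD (by simp [constantCoeff_logOnePlus])
end

section
/- For any prime $p$ and positive integer $n$, the rational number $d_{p,pn}=\frac{(-1)^p}{pn}\frac{(pn+p-1)!}{p!\,p!\,(pn-p)!}+\frac{1}{p^2}$ is an integer. -/
open Finset

lemma factorial_add_prod (m k : ℕ) :
    (m + k).factorial = m.factorial * ∏ i ∈ range k, (m + i + 1) := by
  induction k with
  | zero => simp
  | succ k ih =>
      rw [prod_range_succ, ← mul_assoc, ← ih, ← Nat.add_assoc, Nat.factorial_succ]
      ring

lemma prod_pair {R : Type*} [CommRing R] (x : R) (hx : x * x = 0) (k : ℕ) :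
    (∏ i ∈ range k, (x + (i + 1))) * (∏ i ∈ range k, (x - (i + 1))) =
      (-1) ^ k * ((k.factorial : R)) ^ 2 := by
  induction k with
  | zero => simp
  | succ k ih =>
      rw [prod_range_succ, prod_range_succ]
      have h : (x + ((k : R) + 1)) * (x - ((k : R) + 1)) = -((k : R) + 1) ^ 2 := by
        linear_combination hx
      calc (∏ i ∈ range k, (x + (i + 1))) * (x + ((k : R) + 1)) *
            ((∏ i ∈ range k, (x - (i + 1))) * (x - ((k : R) + 1)))
          = (∏ i ∈ range k, (x + (i + 1))) * (∏ i ∈ range k, (x - (i + 1))) *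
            ((x + ((k : R) + 1)) * (x - ((k : R) + 1))) := by ring
        _ = (-1) ^ k * ((k.factorial : R)) ^ 2 * (-((k : R) + 1) ^ 2) := by rw [ih, h]
        _ = (-1) ^ (k + 1) * (((k + 1).factorial : R)) ^ 2 := by
            rw [Nat.factorial_succ]; push_cast; ring

lemma key_dvd (p n : ℕ) (hp : p.Prime) (hn : 0 < n) :
    (p : ℤ) ^ 2 ∣ (-1) ^ p * ((p * n + p - 1).choose (p - 1) : ℤ) *
      ((p * n - 1).choose (p - 1) : ℤ) + 1 := by
  have hp1 : 2 ≤ p := hp.two_le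
  have hpn : p ≤ p * n := Nat.le_mul_of_pos_right p hn
  set C1 := (p * n + p - 1).choose (p - 1) with hC1
  set C2 := (p * n - 1).choose (p - 1) with hC2
  have h1 : C1 * (p - 1).factorial = ∏ i ∈ range (p - 1), (p * n + i + 1) := by
    have hch := Nat.choose_mul_factorial_mul_factorial
      (show p - 1 ≤ p * n + (p - 1) by omega)
    rw [show p * n + (p - 1) - (p - 1) = p * n from by omega] at hch
    apply Nat.eq_of_mul_eq_mul_right (Nat.factorial_pos (p * n))
    rw [hC1, show p * n + p - 1 = p * n + (p - 1) from by omega, hch,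
      factorial_add_prod (p * n) (p - 1)]
    ring
  have h2 : C2 * (p - 1).factorial = ∏ i ∈ range (p - 1), (p * n - p + i + 1) := by
    have hch := Nat.choose_mul_factorial_mul_factorial
      (show p - 1 ≤ p * n - p + (p - 1) by omega)
    rw [show p * n - p + (p - 1) - (p - 1) = p * n - p from by omega] at hch
    apply Nat.eq_of_mul_eq_mul_right (Nat.factorial_pos (p * n - p))
    rw [hC2, show p * n - 1 = p * n - p + (p - 1) from by omega, hch,
      factorial_add_prod (p * n - p) (p - 1)]
    ring
  haveI : NeZero (p ^ 2) := ⟨by have := hp.pos; positivity⟩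
  set t : ZMod (p ^ 2) := (p : ZMod (p ^ 2)) * (n : ZMod (p ^ 2)) with ht
  have htt : t * t = 0 := by
    have h0 : ((p ^ 2 : ℕ) : ZMod (p ^ 2)) = 0 := ZMod.natCast_self _
    rw [ht]
    calc (p : ZMod (p ^ 2)) * (n : ZMod (p ^ 2)) * ((p : ZMod (p ^ 2)) * (n : ZMod (p ^ 2)))
        = ((p ^ 2 : ℕ) : ZMod (p ^ 2)) * ((n : ZMod (p ^ 2)) * n) := by push_cast; ring
      _ = 0 := by rw [h0]; ring
  have hz1 : (C1 : ZMod (p ^ 2)) * ((p - 1).factorial : ZMod (p ^ 2)) =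
      ∏ i ∈ range (p - 1), (t + (i + 1)) := by
    have hc := congrArg (fun m : ℕ => (m : ZMod (p ^ 2))) h1
    push_cast at hc
    rw [hc]
    exact prod_congr rfl fun i _ => by rw [ht]; ring
  have hz2 : (C2 : ZMod (p ^ 2)) * ((p - 1).factorial : ZMod (p ^ 2)) =
      ∏ i ∈ range (p - 1), (t - (i + 1)) := by
    have hc := congrArg (fun m : ℕ => (m : ZMod (p ^ 2))) h2
    push_cast [Nat.cast_sub hpn] at hc
    rw [hc, ← prod_range_reflect (fun i => t - ((i : ZMod (p ^ 2)) + 1)) (p - 1)]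
    refine prod_congr rfl fun i hi => ?_
    simp only [mem_range] at hi
    have e2 : ((p - 1 - 1 - i : ℕ) : ZMod (p ^ 2)) = (p : ZMod (p ^ 2)) - 2 - i := by
      rw [show p - 1 - 1 - i = p - (2 + i) from by omega,
        Nat.cast_sub (show 2 + i ≤ p from by omega)]
      push_cast; ring
    simp only [e2]
    rw [ht]; ring
  have hunit : IsUnit (((p - 1).factorial : ZMod (p ^ 2)) ^ 2) := by
    apply IsUnit.pow
    rw [ZMod.isUnit_iff_coprime]
    apply Nat.Coprime.pow_right
    exact (hp.coprime_iff_not_dvd.mpr fun h =>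
      by have := (Nat.Prime.dvd_factorial hp).mp h; omega).symm
  have hcc : (C1 : ZMod (p ^ 2)) * C2 = (-1) ^ (p - 1) := by
    apply hunit.mul_left_cancel
    calc ((p - 1).factorial : ZMod (p ^ 2)) ^ 2 * ((C1 : ZMod (p ^ 2)) * C2)
        = ((C1 : ZMod (p ^ 2)) * ((p - 1).factorial : ZMod (p ^ 2))) *
          ((C2 : ZMod (p ^ 2)) * ((p - 1).factorial : ZMod (p ^ 2))) := by ring
      _ = (-1) ^ (p - 1) * (((p - 1).factorial : ZMod (p ^ 2))) ^ 2 := by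
          rw [hz1, hz2]; exact prod_pair t htt (p - 1)
      _ = ((p - 1).factorial : ZMod (p ^ 2)) ^ 2 * (-1) ^ (p - 1) := by ring
  have hzero : (((-1) ^ p * (C1 : ℤ) * C2 + 1 : ℤ) : ZMod (p ^ 2)) = 0 := by
    push_cast
    rw [mul_assoc, hcc, ← pow_add,
      Odd.neg_one_pow (by exact ⟨p - 1, by omega⟩ : Odd (p + (p - 1)))]
    ring
  rw [show ((p : ℤ) ^ 2) = ((p ^ 2 : ℕ) : ℤ) from by push_cast; ring]
  exact (ZMod.intCast_zmod_eq_zero_iff_dvd _ _).mp hzero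

/-- Ooguri–Vafa integrality for `(k, m) = (p, pn)` with `p` prime (zero
framing): the rational number
`d_{p,pn} = ((-1)^p/(pn)) · (pn+p-1)!/(p!·p!·(pn-p)!) + 1/p²` is an integer. -/
theorem d_p_pn_is_integer (p n : ℕ) (hp : p.Prime) (hn : 0 < n) :
    ∃ d : ℤ,
      ((-1 : ℚ) ^ p / ((p : ℚ) * n)) *
          (((p * n + p - 1).factorial : ℚ) /
            ((p.factorial : ℚ) * (p.factorial : ℚ) * ((p * n - p).factorial : ℚ)))
        + 1 / (p : ℚ) ^ 2
        = (d : ℚ) := by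
  have hp1 : 2 ≤ p := hp.two_le
  have hpn : p ≤ p * n := Nat.le_mul_of_pos_right p hn
  obtain ⟨d, hd⟩ := key_dvd p n hp hn
  refine ⟨d, ?_⟩
  have f1 : (p * n + p - 1).factorial
      = (p * n + p - 1).choose (p - 1) * (p - 1).factorial * (p * n).factorial := by
    have hch := Nat.choose_mul_factorial_mul_factorial
      (show p - 1 ≤ p * n + p - 1 by omega)
    rw [show p * n + p - 1 - (p - 1) = p * n from by omega] at hch
    exact hch.symm
  have f2 : (p * n - 1).factorial
      = (p * n - 1).choose (p - 1) * (p - 1).factorial * (p * n - p).factorial := by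
    have hch := Nat.choose_mul_factorial_mul_factorial
      (show p - 1 ≤ p * n - 1 by omega)
    rw [show p * n - 1 - (p - 1) = p * n - p from by omega] at hch
    exact hch.symm
  have f3 : (p * n).factorial = (p * n) * (p * n - 1).factorial :=
    (Nat.mul_factorial_pred (by positivity)).symm
  have f4 : p.factorial = p * (p - 1).factorial :=
    (Nat.mul_factorial_pred hp.ne_zero).symm
  have q1 : ((p * n + p - 1).factorial : ℚ)
      = ((p * n + p - 1).choose (p - 1) : ℚ) * ((p - 1).factorial : ℚ)
        * ((p : ℚ) * n * (((p * n - 1).choose (p - 1) : ℚ) * ((p - 1).factorial : ℚ)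
          * ((p * n - p).factorial : ℚ))) := by
    have h : (p * n + p - 1).factorial
        = (p * n + p - 1).choose (p - 1) * (p - 1).factorial
          * ((p * n) * ((p * n - 1).choose (p - 1) * (p - 1).factorial
            * (p * n - p).factorial)) := by rw [f1, f3, f2]
    exact_mod_cast congrArg (Nat.cast : ℕ → ℚ) h
  have q4 : (p.factorial : ℚ) = (p : ℚ) * ((p - 1).factorial : ℚ) := by
    exact_mod_cast congrArg (Nat.cast : ℕ → ℚ) f4
  have hdQ : ((-1 : ℚ)) ^ p * ((p * n + p - 1).choose (p - 1) : ℚ)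
      * ((p * n - 1).choose (p - 1) : ℚ) + 1 = (p : ℚ) ^ 2 * d := by
    exact_mod_cast congrArg (Int.cast : ℤ → ℚ) hd
  have hp0 : (p : ℚ) ≠ 0 := Nat.cast_ne_zero.mpr hp.pos.ne'
  have hn0 : (n : ℚ) ≠ 0 := Nat.cast_ne_zero.mpr hn.ne'
  have hf0 : ((p - 1).factorial : ℚ) ≠ 0 := Nat.cast_ne_zero.mpr (Nat.factorial_pos _).ne'
  have hg0 : ((p * n - p).factorial : ℚ) ≠ 0 := Nat.cast_ne_zero.mpr (Nat.factorial_pos _).ne'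
  rw [q1, q4]
  field_simp
  linear_combination hdQ
end
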